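/- If μ({ζ ∈ 𝓔 : ε(ζ) = ε⁰}) > 0 (equivalently μ({ε̄ = 0}) > 0), then δ(T) → 0 as T → 0⁺ and D(T) → 0 as T → 0⁺. -/

import Mathlib

open MeasureTheory Real Filter

noncomputable section

variable {𝓔 : Type*} [MeasurableSpace 𝓔]

/-- The (thermodynamic) number of internal degrees of freedom
`δ(T) = (2/(k_B T)) ⬝ (∫ ε̄ e^{-ε̄/(k_B T)} dμ) / (∫ e^{-ε̄/(k_B T)} dμ)`, `ε̄ = ε - ε0`. -/
def deltaFun (μ : Measure 𝓔) (ε : 𝓔 → ℝ) (ε0 : ℝ) (kB T : ℝ) : ℝ :=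
  (2 / (kB * T)) *
    ((∫ ζ, (ε ζ - ε0) * Real.exp (-(ε ζ - ε0) / (kB * T)) ∂μ) /
      (∫ ζ, Real.exp (-(ε ζ - ε0) / (kB * T)) ∂μ))

/-- `D(T) = d(T δ(T))/dT`. -/
def Dfun (μ : Measure 𝓔) (ε : 𝓔 → ℝ) (ε0 : ℝ) (kB T : ℝ) : ℝ :=
  deriv (fun s => s * deltaFun μ ε ε0 kB s) T

/-! With `β = 1/(k_B T)` and `X = ε⁰ - ε ≤ 0`, the partition function is the moment generating
function `Z = mgf X μ`, and `δ = -2β (log Z)'(β)`, `D = 2β² (log Z)''(β)`. By dominated convergence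
`Z(β) → μ{X = 0} > 0`, while `βⁿ ∫ Xⁿ e^{βX} dμ → 0` for `n ≥ 1` because `|x|ⁿ eˣ ≤ n! 2ⁿ e^{x/2}`
on `x ≤ 0`. Hence `β (log Z)' = β ∫ X e^{βX} / Z → 0` and
`β² (log Z)'' = β² ∫ X² e^{βX} / Z - (β (log Z)')² → 0`. -/

open ProbabilityTheory Topology

lemma abs_pow_mul_exp_le {x : ℝ} (hx : x ≤ 0) (n : ℕ) :
    |x ^ n * exp x| ≤ n.factorial * 2 ^ n * exp (x / 2) := by
  have hfac := pow_div_factorial_le_exp (-x / 2) (by linarith) n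
  rw [div_le_iff₀ (by positivity)] at hfac
  have hpow : (-x) ^ n ≤ n.factorial * 2 ^ n * exp (-x / 2) :=
    calc (-x) ^ n = 2 ^ n * (-x / 2) ^ n := by rw [← mul_pow]; ring_nf
      _ ≤ 2 ^ n * (exp (-x / 2) * n.factorial) := by gcongr
      _ = n.factorial * 2 ^ n * exp (-x / 2) := by ring
  rw [abs_mul, abs_pow, abs_of_nonpos hx, abs_of_pos (exp_pos x)]
  calc (-x) ^ n * exp x ≤ n.factorial * 2 ^ n * exp (-x / 2) * exp x := by gcongr
    _ = n.factorial * 2 ^ n * exp (x / 2) := by rw [mul_assoc, ← exp_add]; ring_nf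

section LaplaceAsymptotics

variable {Ω : Type*} [MeasurableSpace Ω] {μ : Measure Ω} {X : Ω → ℝ}

theorem tendsto_integral_comp_mul_atTop (hX : Measurable X) (hX0 : ∀ᵐ ω ∂μ, X ω ≤ 0)
    {c C : ℝ} (hc : 0 < c) (hint : Integrable (fun ω => exp (c * X ω)) μ)
    {φ : ℝ → ℝ} (hφ : Continuous φ) (hφC : ∀ x ≤ 0, |φ x| ≤ C * exp (c * x)) :
    Tendsto (fun t => ∫ ω, φ (t * X ω) ∂μ) atTop (𝓝 (μ.real {ω | X ω = 0} * φ 0)) := by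
  have hC : 0 ≤ C := by simpa using (abs_nonneg _).trans (hφC 0 le_rfl)
  rw [← smul_eq_mul, ← integral_indicator_const _ (measurableSet_eq_fun hX measurable_const)]
  refine tendsto_integral_filter_of_dominated_convergence (fun ω => C * exp (c * X ω))
    (Eventually.of_forall fun t => (hφ.measurable.comp (hX.const_mul t)).aestronglyMeasurable)
    ?_ (hint.const_mul C) ?_
  · filter_upwards [eventually_ge_atTop 1] with t ht
    filter_upwards [hX0] with ω hω
    calc ‖φ (t * X ω)‖ ≤ C * exp (c * (t * X ω)) :=
          hφC _ (mul_nonpos_of_nonneg_of_nonpos (by linarith) hω)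
      _ ≤ C * exp (c * X ω) := by gcongr; nlinarith
  · filter_upwards [hX0] with ω hω
    rcases hω.eq_or_lt with hzero | hneg
    · simp [hzero]
    · rw [Set.indicator_of_notMem (show ω ∉ {x | X x = 0} from hneg.ne)]
      have hdecay : Tendsto (fun t => C * exp (c * (t * X ω))) atTop (𝓝 0) := by
        simpa using (tendsto_exp_atBot.comp
          ((tendsto_id.atTop_mul_const_of_neg hneg).const_mul_atBot hc)).const_mul C
      refine squeeze_zero_norm' ?_ hdecay
      filter_upwards [eventually_ge_atTop 0] with t ht
      exact hφC _ (mul_nonpos_of_nonneg_of_nonpos ht hω)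

theorem measureReal_eq_zero_ne_zero_of_integrable_exp_mul {t : ℝ}
    (h : Integrable (fun ω => exp (t * X ω)) μ) (hground : μ {ω | X ω = 0} ≠ 0) :
    μ.real {ω | X ω = 0} ≠ 0 :=
  ENNReal.toReal_ne_zero.2 ⟨hground,
    ((measure_mono fun ω (hω : X ω = 0) => by simp [hω]).trans_lt
      (h.measure_norm_ge_lt_top one_pos)).ne⟩

theorem Ioi_subset_interior_integrableExpSet
    (hint : ∀ t, 0 < t → Integrable (fun ω => exp (t * X ω)) μ) :
    Set.Ioi 0 ⊆ interior (integrableExpSet X μ) :=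
  interior_maximal hint isOpen_Ioi

theorem hasDerivAt_deriv_cgf {t : ℝ} (ht : t ∈ interior (integrableExpSet X μ)) :
    HasDerivAt (deriv (cgf X μ)) (iteratedDeriv 2 (cgf X μ) t) t := by
  rw [iteratedDeriv_succ, iteratedDeriv_one]
  exact (analyticAt_cgf ht).deriv.differentiableAt.hasDerivAt

variable (hX : Measurable X) (hX0 : ∀ᵐ ω ∂μ, X ω ≤ 0)
  (hint : ∀ t, 0 < t → Integrable (fun ω => exp (t * X ω)) μ)
include hX hX0 hint

theorem tendsto_mgf_atTop : Tendsto (mgf X μ) atTop (𝓝 (μ.real {ω | X ω = 0})) := by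
  have h := tendsto_integral_comp_mul_atTop hX hX0 one_pos (C := 1)
    (by simpa using hint 1 one_pos) continuous_exp (fun x _ => by simp)
  rwa [exp_zero, mul_one] at h

theorem tendsto_pow_mul_integral_pow_mul_exp_atTop {n : ℕ} (hn : n ≠ 0) :
    Tendsto (fun t => t ^ n * μ[fun ω => X ω ^ n * exp (t * X ω)]) atTop (𝓝 0) := by
  have h := tendsto_integral_comp_mul_atTop hX hX0 (c := 1 / 2) (C := n.factorial * 2 ^ n)
    (by norm_num) (hint _ (by norm_num)) (φ := fun x => x ^ n * exp x) (by fun_prop)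
    (fun x hx => by rw [one_div_mul_eq_div]; exact abs_pow_mul_exp_le hx n)
  rw [zero_pow hn, zero_mul, mul_zero] at h
  refine h.congr fun t => ?_
  rw [← integral_const_mul]
  simp only [mul_pow, mul_assoc]

variable (hground : μ {ω | X ω = 0} ≠ 0)
include hground

theorem tendsto_mul_deriv_cgf_atTop : Tendsto (fun t => t * deriv (cgf X μ) t) atTop (𝓝 0) := by
  have h := (tendsto_pow_mul_integral_pow_mul_exp_atTop hX hX0 hint one_ne_zero).div
    (tendsto_mgf_atTop hX hX0 hint)
    (measureReal_eq_zero_ne_zero_of_integrable_exp_mul (hint 1 one_pos) hground)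
  rw [zero_div] at h
  refine h.congr' ?_
  filter_upwards [eventually_gt_atTop 0] with t ht
  rw [deriv_cgf (Ioi_subset_interior_integrableExpSet hint ht)]
  simp only [Pi.div_apply, pow_one, mul_div_assoc]

theorem tendsto_sq_mul_iteratedDeriv_two_cgf_atTop :
    Tendsto (fun t => t ^ 2 * iteratedDeriv 2 (cgf X μ) t) atTop (𝓝 0) := by
  have h := ((tendsto_pow_mul_integral_pow_mul_exp_atTop hX hX0 hint two_ne_zero).div
    (tendsto_mgf_atTop hX hX0 hint)
    (measureReal_eq_zero_ne_zero_of_integrable_exp_mul (hint 1 one_pos) hground)).sub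
    ((tendsto_mul_deriv_cgf_atTop hX hX0 hint hground).pow 2)
  rw [zero_div, zero_pow two_ne_zero, sub_zero] at h
  refine h.congr' ?_
  filter_upwards [eventually_gt_atTop 0] with t ht
  rw [iteratedDeriv_two_cgf (Ioi_subset_interior_integrableExpSet hint ht), Pi.div_apply]
  ring

end LaplaceAsymptotics

section DegreesOfFreedom

variable {μ : Measure 𝓔} {ε : 𝓔 → ℝ} {ε0 kB T : ℝ}

theorem deltaFun_eq_neg_mul_deriv_cgf
    (hβ : (kB * T)⁻¹ ∈ interior (integrableExpSet (fun ζ => ε0 - ε ζ) μ)) :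
    deltaFun μ ε ε0 kB T =
      -2 * (kB * T)⁻¹ * deriv (cgf (fun ζ => ε0 - ε ζ) μ) (kB * T)⁻¹ := by
  have hexp : ∀ ζ, -(ε ζ - ε0) / (kB * T) = (kB * T)⁻¹ * (ε0 - ε ζ) := fun ζ => by ring
  have hH : ∫ ζ, (ε ζ - ε0) * exp ((kB * T)⁻¹ * (ε0 - ε ζ)) ∂μ
      = -∫ ζ, (ε0 - ε ζ) * exp ((kB * T)⁻¹ * (ε0 - ε ζ)) ∂μ := by
    rw [← integral_neg]
    congr 1 with ζ
    ring
  rw [deriv_cgf hβ, deltaFun]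
  simp only [hexp, hH, mgf]
  ring

theorem mul_deltaFun_eq_neg_mul_deriv_cgf (hkB : kB ≠ 0) (hT : T ≠ 0)
    (hβ : (kB * T)⁻¹ ∈ interior (integrableExpSet (fun ζ => ε0 - ε ζ) μ)) :
    T * deltaFun μ ε ε0 kB T = -(2 / kB) * deriv (cgf (fun ζ => ε0 - ε ζ) μ) (kB * T)⁻¹ := by
  rw [deltaFun_eq_neg_mul_deriv_cgf hβ]
  field_simp

theorem Dfun_eq_mul_iteratedDeriv_two_cgf (hkB : 0 < kB) (hT : 0 < T)
    (hI : Set.Ioi 0 ⊆ interior (integrableExpSet (fun ζ => ε0 - ε ζ) μ)) :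
    Dfun μ ε ε0 kB T =
      2 * ((kB * T)⁻¹) ^ 2 * iteratedDeriv 2 (cgf (fun ζ => ε0 - ε ζ) μ) (kB * T)⁻¹ := by
  have hmem : ∀ s, 0 < s → (kB * s)⁻¹ ∈ interior (integrableExpSet (fun ζ => ε0 - ε ζ) μ) :=
    fun s hs => hI (inv_pos.2 (mul_pos hkB hs))
  have hTδ : (fun s => s * deltaFun μ ε ε0 kB s)
      =ᶠ[𝓝 T] fun s => -(2 / kB) * deriv (cgf (fun ζ => ε0 - ε ζ) μ) (kB * s)⁻¹ := by
    filter_upwards [lt_mem_nhds hT] with s hs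
    exact mul_deltaFun_eq_neg_mul_deriv_cgf hkB.ne' hs.ne' (hmem s hs)
  have hinv : HasDerivAt (fun s => (kB * s)⁻¹) (-kB / (kB * T) ^ 2) T := by
    have h := ((hasDerivAt_id T).const_mul kB).inv (mul_pos hkB hT).ne'
    simp only [id, mul_one] at h
    exact h
  have hderiv := ((hasDerivAt_deriv_cgf (hmem T hT)).comp T hinv).const_mul (-(2 / kB))
  rw [Dfun, hTδ.deriv_eq]
  refine hderiv.deriv.trans ?_
  field_simp

end DegreesOfFreedom

theorem delta_tendsto_zero_of_ground_state_general
    (μ : Measure 𝓔)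
    (kB : ℝ) (hkB : 0 < kB)
    (ε : 𝓔 → ℝ) (hε : Measurable ε) (ε0 : ℝ)
    (hlow : ∀ᵐ ζ ∂μ, ε0 ≤ ε ζ)
    (hZ : ∀ β : ℝ, 0 < β → Integrable (fun ζ => Real.exp (-β * (ε ζ - ε0))) μ)
    (hground : μ {ζ | ε ζ = ε0} ≠ 0) :
    Tendsto (fun T => deltaFun μ ε ε0 kB T) (nhdsWithin 0 (Set.Ioi 0)) (nhds 0) ∧
    Tendsto (fun T => Dfun μ ε ε0 kB T) (nhdsWithin 0 (Set.Ioi 0)) (nhds 0) := by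
  set X : 𝓔 → ℝ := fun ζ => ε0 - ε ζ
  have hX : Measurable X := measurable_const.sub hε
  have hX0 : ∀ᵐ ζ ∂μ, X ζ ≤ 0 := hlow.mono fun _ => sub_nonpos.2
  have hint : ∀ t, 0 < t → Integrable (fun ζ => exp (t * X ζ)) μ := fun t ht => by
    simpa only [X, neg_mul, ← mul_neg, neg_sub] using hZ t ht
  have hXground : μ {ζ | X ζ = 0} ≠ 0 := by simpa only [X, sub_eq_zero, eq_comm] using hground
  have hI := Ioi_subset_interior_integrableExpSet hint
  have hβ : Tendsto (fun T => (kB * T)⁻¹) (𝓝[>] 0) atTop := by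
    simpa only [mul_inv] using tendsto_inv_nhdsGT_zero.const_mul_atTop (inv_pos.2 hkB)
  have hTpos : ∀ᶠ T in 𝓝[>] (0 : ℝ), 0 < T := self_mem_nhdsWithin
  constructor
  · have h := ((tendsto_mul_deriv_cgf_atTop hX hX0 hint hXground).comp hβ).const_mul (-2)
    rw [mul_zero] at h
    refine h.congr' (hTpos.mono fun T hT => ?_)
    dsimp only [Function.comp_apply]
    rw [deltaFun_eq_neg_mul_deriv_cgf (hI (inv_pos.2 (mul_pos hkB hT))), mul_assoc]
  · have h :=
      ((tendsto_sq_mul_iteratedDeriv_two_cgf_atTop hX hX0 hint hXground).comp hβ).const_mul 2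
    rw [mul_zero] at h
    refine h.congr' (hTpos.mono fun T hT => ?_)
    dsimp only [Function.comp_apply]
    rw [Dfun_eq_mul_iteratedDeriv_two_cgf hkB hT hI, mul_assoc]

/-- **Proposition (behaviour at zero temperature when the ground state is charged).**
If `μ({ε = ε⁰}) > 0` then `δ(T) → 0` and `D(T) → 0` as `T → 0⁺`. -/
theorem delta_tendsto_zero_of_ground_state
    (μ : Measure 𝓔) (hμ : μ Set.univ ≠ 0)
    (kB : ℝ) (hkB : 0 < kB)
    (ε : 𝓔 → ℝ) (hε : Measurable ε) (ε0 : ℝ)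
    (hlow : ∀ᵐ ζ ∂μ, ε0 ≤ ε ζ)
    (hsup : ∀ R : ℝ, (∀ᵐ ζ ∂μ, R ≤ ε ζ) → R ≤ ε0)
    (hZ : ∀ β : ℝ, 0 < β → Integrable (fun ζ => Real.exp (-β * (ε ζ - ε0))) μ)
    (hground : μ {ζ | ε ζ = ε0} ≠ 0) :
    Tendsto (fun T => deltaFun μ ε ε0 kB T) (nhdsWithin 0 (Set.Ioi 0)) (nhds 0) ∧
    Tendsto (fun T => Dfun μ ε ε0 kB T) (nhdsWithin 0 (Set.Ioi 0)) (nhds 0) :=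
  delta_tendsto_zero_of_ground_state_general μ kB hkB ε hε ε0 hlow hZ hground

end
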